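/- arXiv:1703.04440 — 2 statements merged into one kernel-verified Lean document; each statement's English description precedes it below -/
import Mathlib

section
/- Suppose P is a symmetric positive definite n×n matrix, X̃ is a symmetric matrix with B ᵀX̃ = 0, and AᵀX̃ + X̃A + NᵀX̃N ≥ 0 with AᵀX̃ + X̃A + NᵀX̃N ≠ 0, where AP + PAᵀ + NPNᵀ = −BBᵀ. Then a contradiction follows; i.e., no such X̃ exists. Equivalently: if P > 0 solves AP + PAᵀ + NPNᵀ = −BBᵀ and X̃ is symmetric with BᵀX̃ = 0 and AᵀX̃ + X̃A + NᵀX̃N positive semidefinite, then AᵀX̃ + X̃A + NᵀX̃N = 0. -/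
open Matrix
open scoped ComplexOrder MatrixOrder

/-! Pairing the Lyapunov equation with `X` gives `tr(P M) = -tr(B Bᵀ X) = 0` for
`M = AᵀX + XA + NᵀXN`. Writing `P = Qᴴ Q` with `Q` invertible, `tr(P M)` is the trace of the
positive semidefinite matrix `Q M Qᴴ`, which therefore vanishes, and so does `M`. -/

theorem Matrix.PosSemidef.eq_zero_of_trace_posDef_mul_eq_zero {𝕜 n : Type*} [RCLike 𝕜]
    [Fintype n] {P M : Matrix n n 𝕜} (hP : P.PosDef) (hM : M.PosSemidef)
    (h : (P * M).trace = 0) : M = 0 := by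
  classical
  obtain ⟨Q, hQ, rfl⟩ := CStarAlgebra.isStrictlyPositive_iff_eq_star_mul_self.mp
    hP.isStrictlyPositive
  have hQMQ : Q * M * Qᴴ = 0 := by
    rw [← (hM.mul_mul_conjTranspose_same Q).trace_eq_zero_iff, trace_mul_cycle, ← h,
      star_eq_conjTranspose, Matrix.mul_assoc]
  rwa [← star_eq_conjTranspose, hQ.star.mul_left_eq_zero, hQ.mul_right_eq_zero] at hQMQ

theorem Matrix.trace_mul_lyapunov_adjoint {R n : Type*} [CommSemiring R] [Fintype n]
    (A N P X : Matrix n n R) :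
    (P * (Aᵀ * X + X * A + Nᵀ * X * N)).trace = ((A * P + P * Aᵀ + N * P * Nᵀ) * X).trace := by
  simp only [Matrix.mul_add, Matrix.add_mul, trace_add, ← Matrix.mul_assoc]
  rw [trace_mul_cycle P X A, trace_mul_cycle (P * Nᵀ) X N, ← Matrix.mul_assoc N P Nᵀ]
  ring

theorem stmt3_general (n m : ℕ) (A N : Matrix (Fin n) (Fin n) ℝ)
    (B : Matrix (Fin n) (Fin m) ℝ) (P : Matrix (Fin n) (Fin n) ℝ)
    (hP : P.PosDef) (hLyap : A * P + P * Aᵀ + N * P * Nᵀ = -(B * Bᵀ))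
    (X : Matrix (Fin n) (Fin n) ℝ)
    (hBX : Bᵀ * X = 0) (hPSD : (Aᵀ * X + X * A + Nᵀ * X * N).PosSemidef) :
    Aᵀ * X + X * A + Nᵀ * X * N = 0 := by
  refine hPSD.eq_zero_of_trace_posDef_mul_eq_zero hP ?_
  rw [trace_mul_lyapunov_adjoint, hLyap, Matrix.neg_mul, Matrix.mul_assoc, hBX, Matrix.mul_zero,
    neg_zero, trace_zero]

/-- If `P > 0` solves the generalized Lyapunov equation `AP + PAᵀ + NPNᵀ = -BBᵀ` and
`X̃` is symmetric with `BᵀX̃ = 0` and `AᵀX̃ + X̃A + NᵀX̃N` positive semidefinite, then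
`AᵀX̃ + X̃A + NᵀX̃N = 0`. -/
theorem stmt3 (n m : ℕ) (A N : Matrix (Fin n) (Fin n) ℝ)
    (B : Matrix (Fin n) (Fin m) ℝ) (P : Matrix (Fin n) (Fin n) ℝ)
    (hP : P.PosDef) (hLyap : A * P + P * Aᵀ + N * P * Nᵀ = -(B * Bᵀ))
    (X : Matrix (Fin n) (Fin n) ℝ) (hXsym : Xᵀ = X)
    (hBX : Bᵀ * X = 0) (hPSD : (Aᵀ * X + X * A + Nᵀ * X * N).PosSemidef) :
    Aᵀ * X + X * A + Nᵀ * X * N = 0 :=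
  stmt3_general n m A N B P hP hLyap X hBX hPSD
end

section
/- Let P be a symmetric positive semidefinite n×n matrix and B ∈ ℝ^{n×m} a matrix whose column space is contained in the column space of P. Then for α ≥ ‖BᵀP†B‖₂ (the spectral norm, where P† is the Moore–Penrose pseudoinverse of P), the matrix αP − BBᵀ is positive semidefinite. -/
open Matrix
open scoped Matrix.Norms.L2Operator MatrixOrder

/-! Write `P = S²` with `S = √P` and `C = S P† B`. Since `range B ⊆ range P`, `P P† B = B`, so
`B = S C` and `Cᵀ C = Bᵀ P† B`. Conjugating `C Cᵀ ≤ ‖C Cᵀ‖ • 1 = ‖Cᵀ C‖ • 1` by `S` gives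
`B Bᵀ ≤ ‖Bᵀ P† B‖ • P`. -/

namespace Matrix

theorem mul_mul_eq_self_of_range_le {l k m R : Type*} [Fintype l] [Fintype k] [Fintype m]
    [CommSemiring R] {P : Matrix l k R} {G : Matrix k l R} {B : Matrix l m R}
    (hPGP : P * G * P = P)
    (h : LinearMap.range B.mulVecLin ≤ LinearMap.range P.mulVecLin) :
    P * G * B = B := by
  refine ext_iff_mulVec.mpr fun x => ?_
  obtain ⟨v, hv⟩ := h ⟨x, rfl⟩
  change P *ᵥ v = B *ᵥ x at hv
  rw [← mulVec_mulVec, ← hv, mulVec_mulVec, hPGP]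

variable {n m : Type*} [Fintype n] [DecidableEq n] [Fintype m] [DecidableEq m]

theorem IsHermitian.le_norm_smul_one {A : Matrix n n ℝ} (hA : A.IsHermitian) :
    A ≤ ‖A‖ • 1 := by
  cases isEmpty_or_nonempty n
  · exact (Subsingleton.elim A _).le
  rw [← Algebra.algebraMap_eq_smul_one]
  exact le_algebraMap_of_spectrum_le (fun r hr => (Real.le_norm_self r).trans
    (spectrum.norm_le_norm_of_mem hr)) hA.isSelfAdjoint

theorem norm_mul_transpose_self (C : Matrix n m ℝ) : ‖C * Cᵀ‖ = ‖Cᵀ * C‖ := by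
  simp only [← conjTranspose_eq_transpose_of_trivial]
  nth_rewrite 1 [← conjTranspose_conjTranspose C]
  rw [l2_opNorm_conjTranspose_mul_self, l2_opNorm_conjTranspose_mul_self,
    l2_opNorm_conjTranspose]

theorem transpose_mul_mul_transpose_le_norm_smul (S : Matrix n n ℝ) (C : Matrix n m ℝ) :
    (Sᵀ * C) * (Sᵀ * C)ᵀ ≤ ‖Cᵀ * C‖ • (Sᵀ * S) := by
  have hC : C * Cᵀ ≤ ‖Cᵀ * C‖ • 1 := by
    rw [← norm_mul_transpose_self]
    exact IsHermitian.le_norm_smul_one (by simpa using isHermitian_mul_conjTranspose_self C)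
  simpa [star_eq_conjTranspose, Matrix.mul_assoc] using star_left_conjugate_le_conjugate hC S

theorem PosSemidef.mul_transpose_le_norm_smul {P G : Matrix n n ℝ} {B : Matrix n m ℝ}
    (hP : P.PosSemidef) (hPGP : P * G * P = P)
    (hrange : LinearMap.range B.mulVecLin ≤ LinearMap.range P.mulVecLin) :
    B * Bᵀ ≤ ‖Bᵀ * G * B‖ • P := by
  set S := CFC.sqrt P
  have hSS : S * S = P := CFC.sqrt_mul_sqrt_self P hP.nonneg
  have hST : Sᵀ = S := by simpa using (CFC.sqrt_nonneg P).posSemidef.1.eq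
  set C := S * G * B
  have hB : Sᵀ * C = B := by
    rw [hST, ← mul_mul_eq_self_of_range_le hPGP hrange, ← hSS]
    simp only [C, Matrix.mul_assoc]
  have hCC : Cᵀ * C = Bᵀ * G * B := by
    calc Cᵀ * C = (Sᵀ * C)ᵀ * G * B := by simp [C, Matrix.mul_assoc]
      _ = Bᵀ * G * B := by rw [hB]
  have hconj := transpose_mul_mul_transpose_le_norm_smul S C
  rwa [hB, hCC, hST, hSS] at hconj

end Matrix

theorem stmt6_general (n m : ℕ) (P : Matrix (Fin n) (Fin n) ℝ)
    (B : Matrix (Fin n) (Fin m) ℝ) (hP : P.PosSemidef)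
    (hrange : LinearMap.range B.mulVecLin ≤ LinearMap.range P.mulVecLin)
    (Pdag : Matrix (Fin n) (Fin n) ℝ)
    (h1 : P * Pdag * P = P)
    (α : ℝ) (hα : ‖Bᵀ * Pdag * B‖ ≤ α) :
    (α • P - B * Bᵀ).PosSemidef := by
  have hle : ‖Bᵀ * Pdag * B‖ • P ≤ α • P := by
    rw [le_iff, ← sub_smul]
    exact hP.smul (sub_nonneg.mpr hα)
  exact le_iff.mp ((hP.mul_transpose_le_norm_smul h1 hrange).trans hle)

/-- If `P ≥ 0`, `range B ⊆ range P`, `Pdag` is the Moore–Penrose inverse of `P`,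
and `α ≥ ‖Bᵀ P† B‖₂`, then `αP - BBᵀ` is positive semidefinite. -/
theorem stmt6 (n m : ℕ) (P : Matrix (Fin n) (Fin n) ℝ)
    (B : Matrix (Fin n) (Fin m) ℝ) (hP : P.PosSemidef)
    (hrange : LinearMap.range B.mulVecLin ≤ LinearMap.range P.mulVecLin)
    (Pdag : Matrix (Fin n) (Fin n) ℝ)
    (h1 : P * Pdag * P = P) (h2 : Pdag * P * Pdag = Pdag)
    (h3 : (P * Pdag)ᵀ = P * Pdag) (h4 : (Pdag * P)ᵀ = Pdag * P)
    (α : ℝ) (hα : ‖Bᵀ * Pdag * B‖ ≤ α) :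
    (α • P - B * Bᵀ).PosSemidef :=
  stmt6_general n m P B hP hrange Pdag h1 α hα
end
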